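/- arXiv:2506.02939 — 2 statements merged into one kernel-verified Lean document; each statement's English description precedes it below -/
import Mathlib

section
/- Let A, Ã ∈ ℝ^{b×n} and B ∈ ℝ^{b×m}, with O = Aᵀ B and Õ = Ãᵀ B. Suppose for each row i either ‖A_i − Ã_i‖ ≤ ε‖A_i‖ (indices in I) or Ã_i = 0. Then ‖O − Õ‖_F² ≤ ‖B‖₂² · (ε²·Σ_{i∈I}‖A_i‖² + Σ_{i∉I}‖A_i‖²), where ‖B‖₂ is the spectral norm of B. -/
open Matrix
/-- Euclidean norm of the `i`-th row of a matrix. -/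
noncomputable def rowNorm {b n : ℕ} (A : Matrix (Fin b) (Fin n) ℝ) (i : Fin b) : ℝ :=
  Real.sqrt (∑ j, (A i j) ^ 2)

/-- Squared Frobenius norm of a matrix. -/
def frobSq {n m : ℕ} (O : Matrix (Fin n) (Fin m) ℝ) : ℝ :=
  ∑ i, ∑ j, (O i j) ^ 2

/-- Spectral (operator) norm of a matrix. -/
noncomputable def specNorm {b m : ℕ} (B : Matrix (Fin b) (Fin m) ℝ) : ℝ :=
  ‖LinearMap.toContinuousLinearMap (Matrix.toEuclideanLin B)‖

lemma key {b m : ℕ} (B : Matrix (Fin b) (Fin m) ℝ) (v : Fin b → ℝ) :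
    ∑ j, (∑ i, v i * B i j) ^ 2 ≤ specNorm B ^ 2 * ∑ i, (v i) ^ 2 := by
  set L := LinearMap.toContinuousLinearMap (Matrix.toEuclideanLin B) with hL
  set w : EuclideanSpace ℝ (Fin m) := WithLp.toLp 2 (fun j => ∑ i, v i * B i j) with hw
  set v' : EuclideanSpace ℝ (Fin b) := WithLp.toLp 2 v with hv'
  have hnormw : ‖w‖ ^ 2 = ∑ j, (∑ i, v i * B i j) ^ 2 := by
    rw [EuclideanSpace.norm_eq, Real.sq_sqrt (by positivity)]
    simp [hw, sq_abs]
  have hnormv : ‖v'‖ ^ 2 = ∑ i, (v i) ^ 2 := by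
    rw [EuclideanSpace.norm_eq, Real.sq_sqrt (by positivity)]
    simp [hv', sq_abs]
  have hinner : ‖w‖ ^ 2 = inner ℝ v' (L w) := by
    have h1 : (inner ℝ v' (L w) : ℝ) = ∑ i, v' i * ∑ j, B i j * w j := by
      simp [hL, real_inner_comm, EuclideanSpace.inner_eq_star_dotProduct]
      simp [Matrix.toEuclideanLin_apply, Matrix.mulVec, dotProduct, mul_comm]
    rw [h1, hnormw]
    simp only [Finset.mul_sum]
    rw [Finset.sum_comm]
    congr 1; ext j
    rw [sq, Finset.sum_mul]
    congr 1; ext i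
    ring
  have hCS : (inner ℝ v' (L w) : ℝ) ≤ ‖v'‖ * ‖L w‖ := real_inner_le_norm _ _
  have hop : ‖L w‖ ≤ specNorm B * ‖w‖ := L.le_opNorm w
  have hwle : ‖w‖ ^ 2 ≤ ‖v'‖ * (specNorm B * ‖w‖) := by
    calc ‖w‖ ^ 2 = inner ℝ v' (L w) := hinner
    _ ≤ ‖v'‖ * ‖L w‖ := hCS
    _ ≤ ‖v'‖ * (specNorm B * ‖w‖) := by
        exact mul_le_mul_of_nonneg_left hop (norm_nonneg _)
  have hsn : (0:ℝ) ≤ specNorm B := by unfold specNorm; exact norm_nonneg _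
  have hfin : ‖w‖ ≤ specNorm B * ‖v'‖ := by
    rcases eq_or_lt_of_le (norm_nonneg w) with h0 | h0
    · rw [← h0]; exact mul_nonneg hsn (norm_nonneg _)
    · exact le_of_mul_le_mul_right (by nlinarith) h0
  calc ∑ j, (∑ i, v i * B i j) ^ 2 = ‖w‖ ^ 2 := hnormw.symm
  _ ≤ (specNorm B * ‖v'‖) ^ 2 := by
      apply pow_le_pow_left₀ (norm_nonneg w) hfin
  _ = specNorm B ^ 2 * ∑ i, (v i) ^ 2 := by rw [mul_pow, hnormv]

lemma rowNorm_sq {b n : ℕ} (A : Matrix (Fin b) (Fin n) ℝ) (i : Fin b) :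
    rowNorm A i ^ 2 = ∑ j, (A i j) ^ 2 := by
  rw [rowNorm, Real.sq_sqrt (by positivity)]

theorem product_error_bound {b n m : ℕ} (ε : ℝ) (hε : 0 ≤ ε)
    (A Atil : Matrix (Fin b) (Fin n) ℝ) (B : Matrix (Fin b) (Fin m) ℝ)
    (I : Finset (Fin b))
    (hI : ∀ i ∈ I, rowNorm (A - Atil) i ≤ ε * rowNorm A i)
    (hI' : ∀ i ∉ I, Atil i = 0) :
    frobSq (Aᵀ * B - Atilᵀ * B) ≤
      specNorm B ^ 2 *
        (ε ^ 2 * ∑ i ∈ I, rowNorm A i ^ 2 + ∑ i ∈ Iᶜ, rowNorm A i ^ 2) := by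
  set E := A - Atil with hE
  have hsn : (0:ℝ) ≤ specNorm B := by unfold specNorm; exact norm_nonneg _
  have hentry : ∀ k j, (Aᵀ * B - Atilᵀ * B) k j = ∑ i, E i k * B i j := by
    intro k j
    simp [Matrix.mul_apply, Matrix.sub_apply, hE, sub_mul, Finset.sum_sub_distrib]
  have step1 : frobSq (Aᵀ * B - Atilᵀ * B) ≤ specNorm B ^ 2 * ∑ i, rowNorm E i ^ 2 := by
    unfold frobSq
    calc ∑ k, ∑ j, ((Aᵀ * B - Atilᵀ * B) k j) ^ 2
        = ∑ k, ∑ j, (∑ i, E i k * B i j) ^ 2 := by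
          congr 1; ext k; congr 1; ext j; rw [hentry]
      _ ≤ ∑ k, specNorm B ^ 2 * ∑ i, (E i k) ^ 2 := by
          apply Finset.sum_le_sum
          intro k _
          exact key B (fun i => E i k)
      _ = specNorm B ^ 2 * ∑ i, rowNorm E i ^ 2 := by
          rw [← Finset.mul_sum]
          congr 1
          rw [Finset.sum_comm]
          congr 1; ext i
          rw [rowNorm_sq]
  have step2 : ∑ i, rowNorm E i ^ 2 ≤
      ε ^ 2 * ∑ i ∈ I, rowNorm A i ^ 2 + ∑ i ∈ Iᶜ, rowNorm A i ^ 2 := by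
    rw [← Finset.sum_add_sum_compl I, Finset.mul_sum]
    apply add_le_add
    · apply Finset.sum_le_sum
      intro i hi
      have h := hI i hi
      have := pow_le_pow_left₀ (Real.sqrt_nonneg _) h 2
      calc rowNorm E i ^ 2 ≤ (ε * rowNorm A i) ^ 2 := this
        _ = ε ^ 2 * rowNorm A i ^ 2 := by ring
    · apply Finset.sum_le_sum
      intro i hi
      have h0 := hI' i (Finset.mem_compl.mp hi)
      have : E i = A i := by
        ext j; simp [hE, Matrix.sub_apply, congrFun h0 j]
      unfold rowNorm
      simp only [this]
      exact le_refl _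
  calc frobSq (Aᵀ * B - Atilᵀ * B) ≤ specNorm B ^ 2 * ∑ i, rowNorm E i ^ 2 := step1
    _ ≤ _ := by
        apply mul_le_mul_of_nonneg_left step2 (by positivity)
end

section
/- Let rows {1,…,b} each have an ε-neighborhood N(i) ⊆ {1,…,b} with |N(i)| ≥ n_min ≥ 1. Sample k indices uniformly without replacement from {1,…,b} to form the generator set. If k > (b/n_min)·ln(b/δ) for some 0 < δ < 1, then with probability at least 1 − δ, every row i has at least one sampled generator in its neighborhood N(i). -/
open Finset

lemma pamm_term (b m i : ℕ) : (b - m - i) * b ≤ (b - i) * (b - m) := by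
  rcases le_or_gt b (m + i) with h | h
  · have h0 : b - m - i = 0 := by omega
    simp [h0]
  · have h1 : m ≤ b := by omega
    have h2 : i ≤ b := by omega
    have h3 : i ≤ b - m := by omega
    zify [h1, h2, h3]
    nlinarith [mul_nonneg (Int.ofNat_nonneg i) (Int.ofNat_nonneg m)]

lemma pamm_key (b m k : ℕ) : (b - m).choose k * b ^ k ≤ b.choose k * (b - m) ^ k := by
  have h : (b - m).descFactorial k * b ^ k ≤ b.descFactorial k * (b - m) ^ k := by
    rw [Nat.descFactorial_eq_prod_range, Nat.descFactorial_eq_prod_range]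
    calc (∏ i ∈ range k, (b - m - i)) * b ^ k
        = ∏ i ∈ range k, ((b - m - i) * b) := by
          rw [Finset.prod_mul_distrib, Finset.prod_const, Finset.card_range]
      _ ≤ ∏ i ∈ range k, ((b - i) * (b - m)) :=
          Finset.prod_le_prod' fun i _ => pamm_term b m i
      _ = (∏ i ∈ range k, (b - i)) * (b - m) ^ k := by
          rw [Finset.prod_mul_distrib, Finset.prod_const, Finset.card_range]
  rw [Nat.descFactorial_eq_factorial_mul_choose, Nat.descFactorial_eq_factorial_mul_choose,
    mul_assoc, mul_assoc] at h
  exact Nat.le_of_mul_le_mul_left h k.factorial_pos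

theorem pamm_coverage {b k nmin : ℕ} (hb : 1 ≤ b) (hkb : k ≤ b) (hnmin : 1 ≤ nmin)
    (N : Fin b → Finset (Fin b)) (hself : ∀ i, i ∈ N i) (hcard : ∀ i, nmin ≤ (N i).card)
    (δ : ℝ) (hδ0 : 0 < δ) (hδ1 : δ < 1)
    (hk : ((b : ℝ) / nmin) * Real.log ((b : ℝ) / δ) < k) :
    1 - δ <
      ((((Finset.univ : Finset (Fin b)).powersetCard k).filter
          (fun G => ∀ i, (G ∩ N i).Nonempty)).card : ℝ) /
        (((Finset.univ : Finset (Fin b)).powersetCard k).card : ℝ) := by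
  classical
  set T := (Finset.univ : Finset (Fin b)).powersetCard k with hT
  have hTcard : T.card = b.choose k := by
    rw [hT, Finset.card_powersetCard, Finset.card_univ, Fintype.card_fin]
  have hm_le_b : nmin ≤ b := by
    have h1 := hcard ⟨0, hb⟩
    have h2 : (N ⟨0, hb⟩).card ≤ b := by
      simpa using Finset.card_le_univ (N ⟨0, hb⟩)
    omega
  set Good := T.filter (fun G => ∀ i, (G ∩ N i).Nonempty) with hGood
  set Bad := T.filter (fun G => ¬ ∀ i, (G ∩ N i).Nonempty) with hBadDef
  have hsplit : Good.card + Bad.card = T.card :=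
    Finset.card_filter_add_card_filter_not _
  -- Bad count bound
  have hBadsub : Bad ⊆ Finset.univ.biUnion (fun i => ((N i)ᶜ).powersetCard k) := by
    intro G hG
    rw [hBadDef, Finset.mem_filter] at hG
    obtain ⟨hGT, hbad⟩ := hG
    push_neg at hbad
    obtain ⟨i, hi⟩ := hbad
    rw [Finset.mem_biUnion]
    refine ⟨i, Finset.mem_univ i, ?_⟩
    rw [hT, Finset.mem_powersetCard] at hGT
    rw [Finset.mem_powersetCard]
    refine ⟨?_, hGT.2⟩
    intro x hx
    rw [Finset.mem_compl]
    intro hxN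
    have hmem : x ∈ G ∩ N i := Finset.mem_inter.mpr ⟨hx, hxN⟩
    rw [hi] at hmem
    exact absurd hmem (Finset.notMem_empty x)
  have hBadcard : Bad.card ≤ b * (b - nmin).choose k := by
    calc Bad.card ≤ (Finset.univ.biUnion (fun i => ((N i)ᶜ).powersetCard k)).card :=
          Finset.card_le_card hBadsub
      _ ≤ ∑ i : Fin b, (((N i)ᶜ).powersetCard k).card := Finset.card_biUnion_le
      _ ≤ ∑ _i : Fin b, (b - nmin).choose k := by
          apply Finset.sum_le_sum
          intro i _
          rw [Finset.card_powersetCard, Finset.card_compl, Fintype.card_fin]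
          exact Nat.choose_le_choose k (Nat.sub_le_sub_left (hcard i) b)
      _ = b * (b - nmin).choose k := by
          rw [Finset.sum_const, Finset.card_univ, Fintype.card_fin, smul_eq_mul]
  -- real estimates
  have hb0 : (0:ℝ) < b := by exact_mod_cast hb
  have hm0 : (0:ℝ) < nmin := by exact_mod_cast hnmin
  have hC0 : 0 < (b.choose k : ℝ) := by exact_mod_cast Nat.choose_pos hkb
  set r : ℝ := ((b:ℝ) - nmin) / b with hr
  have hr0 : 0 ≤ r := by
    apply div_nonneg _ (le_of_lt hb0)
    have : (nmin:ℝ) ≤ b := by exact_mod_cast hm_le_b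
    linarith
  have hrexp : r ≤ Real.exp (-(nmin / b)) := by
    have h := Real.add_one_le_exp (-((nmin:ℝ) / b))
    rw [hr]
    rw [sub_div, div_self (ne_of_gt hb0)]
    linarith
  have hchoose : ((b - nmin).choose k : ℝ) ≤ (b.choose k : ℝ) * r ^ k := by
    have h := pamm_key b nmin k
    have hcast : (((b - nmin).choose k * b ^ k : ℕ) : ℝ) ≤ ((b.choose k * (b - nmin) ^ k : ℕ) : ℝ) := by
      exact_mod_cast h
    push_cast [Nat.cast_sub hm_le_b] at hcast
    rw [hr, div_pow, ← mul_div_assoc, le_div_iff₀ (by positivity)]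
    exact hcast
  have hlog : Real.log ((b:ℝ) / δ) < (k:ℝ) * nmin / b := by
    have hmb : (0:ℝ) < (nmin:ℝ) / b := by positivity
    have := mul_lt_mul_of_pos_right hk hmb
    have heq : ((b : ℝ) / nmin) * Real.log ((b : ℝ) / δ) * ((nmin:ℝ)/b) = Real.log ((b:ℝ)/δ) := by
      field_simp
    rw [heq] at this
    calc Real.log ((b:ℝ)/δ) < (k:ℝ) * ((nmin:ℝ)/b) := this
      _ = (k:ℝ) * nmin / b := by ring
  have hexp : (b:ℝ) * Real.exp (-((k:ℝ) * nmin / b)) < δ := by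
    rw [← lt_div_iff₀' hb0]
    have hδb : (0:ℝ) < δ / b := by positivity
    rw [← Real.exp_log hδb]
    apply Real.exp_lt_exp.mpr
    have : δ / (b:ℝ) = ((b:ℝ)/δ)⁻¹ := by
      field_simp
    rw [this, Real.log_inv]
    linarith
  have hBadReal : (Bad.card : ℝ) < δ * (b.choose k : ℝ) := by
    calc (Bad.card : ℝ) ≤ (b : ℝ) * ((b - nmin).choose k : ℝ) := by exact_mod_cast hBadcard
      _ ≤ (b : ℝ) * ((b.choose k : ℝ) * r ^ k) := by
          apply mul_le_mul_of_nonneg_left hchoose (le_of_lt hb0)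
      _ ≤ (b : ℝ) * ((b.choose k : ℝ) * Real.exp (-((nmin:ℝ)/b)) ^ k) := by
          apply mul_le_mul_of_nonneg_left _ (le_of_lt hb0)
          apply mul_le_mul_of_nonneg_left _ (le_of_lt hC0)
          exact pow_le_pow_left₀ hr0 hrexp k
      _ = (b.choose k : ℝ) * ((b:ℝ) * Real.exp (-((k:ℝ) * nmin / b))) := by
          rw [← Real.exp_nat_mul]
          ring_nf
      _ < (b.choose k : ℝ) * δ := by
          exact mul_lt_mul_of_pos_left hexp hC0
      _ = δ * (b.choose k : ℝ) := mul_comm _ _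
  -- conclude
  rw [hTcard]
  rw [lt_div_iff₀ hC0]
  have hGoodReal : (Good.card : ℝ) = (b.choose k : ℝ) - (Bad.card : ℝ) := by
    have : (Good.card : ℝ) + (Bad.card : ℝ) = (b.choose k : ℝ) := by
      exact_mod_cast hTcard ▸ hsplit
    linarith
  rw [hGoodReal]
  nlinarith
end
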